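/- Let α be an irrational real number with 0 < α < 1/2, let k ≥ 0, and let m be a positive integer. (a) If ‖mα‖ ≤ ‖q_kα‖, then there exists a factor of slope α that is an abelian power of period m and exponent q_{k+1}. (b) If ‖mα‖ ≥ ‖q_kα‖, then every factor of slope α that is an abelian power of period m and exponent e satisfies e < q_{k+1} + q_k. -/

import Mathlib

/-! With `θ_{k+1} = ‖q_k α‖`, the recursion `θ_{k+1} = θ_{k-1} - a_k θ_k` gives
`q_{k+1} θ_{k+1} + q_k θ_{k+2} = 1`, and `θ` decreases, so
`q_{k+1} ‖q_k α‖ < 1 < (q_{k+1} + q_k) ‖q_k α‖`. Both parts then follow from the criterion that a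
factor of slope `α` which is an abelian power of period `m` and exponent `e` exists iff
`e ‖m α‖ < 1`. The number of `1`s in positions `[i, i + n)` of a Sturmian word is
`⌊ρ + (i + n) α⌋ - ⌊ρ + i α⌋` (or the same with ceilings), so `e` blocks with `c` ones each force
`|e c - e m α| < 1`. Conversely, if `c` is the integer nearest to `m α`, an intercept `ρ` keeping
`ρ + j (m α - c)` in `[0, 1)` for all `j ≤ e` gives exactly `c` ones in each block of length `m`
of the lower word. -/

open scoped Classical

noncomputable section

namespace SturmianAbelian

/-- Complete quotients: `cq α t = α_t` for `t ≥ 1`; `cq α 0 = α` is a dummy value chosen so that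
`cq α 1 = 1/(α - ⌊α⌋) = 1/α` when `0 < α < 1`. -/
noncomputable def cq (α : ℝ) : ℕ → ℝ
  | 0 => α
  | t + 1 => (cq α t - ⌊cq α t⌋)⁻¹

/-- Partial quotients: `pq α t = a_t = ⌊α_t⌋` for `t ≥ 1`. -/
noncomputable def pq (α : ℝ) (t : ℕ) : ℕ := (⌊cq α t⌋).toNat

/-- Denominators of the convergents of `α`: `qd α k = q_k`, with
`q_0 = 1`, `q_1 = a_1`, `q_k = a_k q_{k-1} + q_{k-2}`. -/
noncomputable def qd (α : ℝ) : ℕ → ℕ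
  | 0 => 1
  | 1 => pq α 1
  | (k + 2) => pq α (k + 2) * qd α (k + 1) + qd α k

/-- Distance from `x` to the nearest integer, `‖x‖`. -/
noncomputable def nint (x : ℝ) : ℝ := min (Int.fract x) (1 - Int.fract x)

/-- The representative of `x` modulo 1 lying in `(0, 1]`. -/
noncomputable def fract' (x : ℝ) : ℝ := 1 - Int.fract (-x)

/-- The Sturmian word of slope `α` and intercept `ρ` in the lower convention:
`s n = 1` iff the fractional part of `ρ + nα` lies in `[1 - α, 1)`. -/
noncomputable def lowerWord (α ρ : ℝ) (n : ℕ) : Bool :=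
  if 1 - α ≤ Int.fract (ρ + (n : ℝ) * α) then true else false

/-- The Sturmian word of slope `α` and intercept `ρ` in the upper convention:
`s n = 1` iff the representative of `ρ + nα` modulo 1 in `(0,1]` lies in `(1 - α, 1]`. -/
noncomputable def upperWord (α ρ : ℝ) (n : ℕ) : Bool :=
  if 1 - α < fract' (ρ + (n : ℝ) * α) then true else false

/-- `s` is a Sturmian word of slope `α` (either convention, some intercept `ρ ∈ [0,1)`). -/
def IsSturmian (α : ℝ) (s : ℕ → Bool) : Prop :=
  ∃ ρ : ℝ, 0 ≤ ρ ∧ ρ < 1 ∧ (s = lowerWord α ρ ∨ s = upperWord α ρ)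

/-- `w` is a (finite, contiguous) factor of the infinite word `s`. -/
def FactorOf (s : ℕ → Bool) (w : List Bool) : Prop :=
  ∃ i : ℕ, w = (List.range w.length).map fun j => s (i + j)

/-- `w` is a factor of slope `α`. -/
def IsFactor (α : ℝ) (w : List Bool) : Prop :=
  ∃ s : ℕ → Bool, IsSturmian α s ∧ FactorOf s w

/-- Abelian equivalence: same length and the same number of occurrences of the letter 1. -/
def AbEq (u v : List Bool) : Prop :=
  u.length = v.length ∧ u.count true = v.count true

/-- `u` is an abelian power of period `m` and exponent `e`: a concatenation of `e ≥ 2` pairwise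
abelian equivalent blocks, each of length `m ≥ 1`. -/
def IsAbelianPower (m e : ℕ) (u : List Bool) : Prop :=
  1 ≤ m ∧ 2 ≤ e ∧ u.length = e * m ∧
  ∀ i < e, ∀ j < e, AbEq ((u.drop (i * m)).take m) ((u.drop (j * m)).take m)

/-- `w` has abelian period `m`: `w` is a contiguous factor of some abelian power of period `m`. -/
def HasAbPeriod (w : List Bool) (m : ℕ) : Prop :=
  ∃ e u, IsAbelianPower m e u ∧ w <:+: u

/-- `m` is the minimum abelian period of `w`. -/
def MinAbPeriod (w : List Bool) (m : ℕ) : Prop :=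
  IsLeast {p : ℕ | HasAbPeriod w p} m

/-- `M(α) = {t·q_k : k ≥ 0, 1 ≤ t ≤ a_{k+1}}`. -/
def Mset (α : ℝ) : Set ℕ :=
  {m | ∃ k t : ℕ, 1 ≤ t ∧ t ≤ pq α (k + 1) ∧ m = t * qd α k}

/-- The set of denominators of convergents and semiconvergents of `α`. -/
def Qsc (α : ℝ) : Set ℕ :=
  {m | (∃ k : ℕ, m = qd α k) ∨
    ∃ k l : ℕ, 1 ≤ k ∧ 1 ≤ l ∧ l < pq α (k + 1) ∧ m = l * qd α k + qd α (k - 1)}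

/-- The singular factor of length `q_k`: the unique factor of slope `α` of length `q_k` that is not
abelian equivalent to any other factor of slope `α` of the same length. -/
def IsSingular (α : ℝ) (k : ℕ) (s : List Bool) : Prop :=
  IsFactor α s ∧ s.length = qd α k ∧
  ∀ u : List Bool, IsFactor α u → u.length = qd α k → u ≠ s → ¬ AbEq u s

/-- `v` occurs in `u` at position `i`. -/
def OccursAt (v u : List Bool) (i : ℕ) : Prop :=
  i + v.length ≤ u.length ∧ (u.drop i).take v.length = v

/-- `u` is a complete first return to `v`: `v` is a prefix and a suffix of `u` and `v` has exactly
two occurrences in `u`. -/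
def CompleteFirstReturn (v u : List Bool) : Prop :=
  v <+: u ∧ v <:+ u ∧ {i | OccursAt v u i}.ncard = 2

/-- `u` is a complete first return to `v` in the same phase. -/
def CFRSamePhase (v u : List Bool) : Prop :=
  v <+: u ∧ v <:+ u ∧ u.length % v.length = 0 ∧
  2 ≤ {i | OccursAt v u i}.ncard ∧
  ∀ i : ℕ, OccursAt v u i → i % v.length = 0 → i = 0 ∨ i = u.length - v.length

variable {α : ℝ}

lemma irrational_cq (hirr : Irrational α) : ∀ t, Irrational (cq α t)
  | 0 => hirr
  | t + 1 => ((irrational_cq hirr t).sub_intCast ⌊cq α t⌋).inv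

lemma cq_succ (t : ℕ) : cq α (t + 1) = (Int.fract (cq α t))⁻¹ := rfl

lemma cq_one (h0 : 0 < α) (h1 : α < 1) : cq α 1 = α⁻¹ := by
  rw [cq_succ, cq, Int.fract_eq_self.mpr ⟨h0.le, h1⟩]

lemma fract_cq_pos (hirr : Irrational α) (t : ℕ) : 0 < Int.fract (cq α t) :=
  Int.fract_pos.mpr ((irrational_cq hirr t).ne_int _)

lemma one_lt_cq_succ (hirr : Irrational α) (t : ℕ) : 1 < cq α (t + 1) :=
  one_lt_inv_iff₀.mpr ⟨fract_cq_pos hirr t, Int.fract_lt_one _⟩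

lemma pq_succ_cast (hirr : Irrational α) (t : ℕ) : (pq α (t + 1) : ℝ) = ⌊cq α (t + 1)⌋ := by
  have h : 0 ≤ ⌊cq α (t + 1)⌋ := Int.floor_nonneg.mpr (zero_le_one.trans (one_lt_cq_succ hirr t).le)
  rw [pq, ← Int.cast_natCast, Int.toNat_of_nonneg h]

lemma fract_cq_succ (hirr : Irrational α) (t : ℕ) :
    Int.fract (cq α (t + 1)) = cq α (t + 1) - pq α (t + 1) := by
  rw [pq_succ_cast hirr]
  rfl

lemma one_le_pq_succ (hirr : Irrational α) (t : ℕ) : 1 ≤ pq α (t + 1) := by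
  have h : (1 : ℤ) ≤ ⌊cq α (t + 1)⌋ :=
    Int.le_floor.mpr (by exact_mod_cast (one_lt_cq_succ hirr t).le)
  unfold pq
  omega

lemma two_le_pq_one (h0 : 0 < α) (h2 : α < 1 / 2) : 2 ≤ pq α 1 := by
  have hinv : (2 : ℝ) < α⁻¹ := by
    rw [lt_inv_comm₀ two_pos h0]
    linarith
  have h : (2 : ℤ) ≤ ⌊cq α 1⌋ := by
    rw [Int.le_floor, cq_one h0 (by linarith)]
    exact_mod_cast hinv.le
  unfold pq
  omega

lemma one_le_qd (hirr : Irrational α) : ∀ k, 1 ≤ qd α k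
  | 0 => le_rfl
  | 1 => one_le_pq_succ hirr 0
  | k + 2 => (one_le_qd hirr k).trans (Nat.le_add_left _ _)

lemma two_le_qd_succ (hirr : Irrational α) (h0 : 0 < α) (h2 : α < 1 / 2) :
    ∀ k, 2 ≤ qd α (k + 1)
  | 0 => two_le_pq_one h0 h2
  | k + 1 => by
    change 2 ≤ pq α (k + 2) * qd α (k + 1) + qd α k
    have h : 1 * 1 ≤ pq α (k + 2) * qd α (k + 1) :=
      Nat.mul_le_mul (one_le_pq_succ hirr (k + 1)) (one_le_qd hirr (k + 1))
    have := one_le_qd hirr k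
    omega

/-- `convNum α k = p_k`, the numerator of the convergent with denominator `qd α k = q_k`. -/
def convNum (α : ℝ) : ℕ → ℤ
  | 0 => 0
  | 1 => 1
  | k + 2 => pq α (k + 2) * convNum α (k + 1) + convNum α k

/-- `cfDist α (k + 1) = ‖q_k α‖` (see `nint_qd_mul`), with `cfDist α 0 = 1` in the role of
`‖q_{-1} α‖`. -/
def cfDist (α : ℝ) : ℕ → ℝ
  | 0 => 1
  | 1 => α
  | k + 2 => cfDist α k - pq α (k + 1) * cfDist α (k + 1)

lemma qd_mul_sub_convNum : ∀ k, (qd α k : ℝ) * α - convNum α k = (-1) ^ k * cfDist α (k + 1)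
  | 0 => by simp [qd, convNum, cfDist]
  | 1 => by simp [qd, convNum, cfDist]
  | k + 2 => by
    have ih₀ := qd_mul_sub_convNum k
    have ih₁ := qd_mul_sub_convNum (k + 1)
    simp only [qd, convNum, cfDist, Nat.cast_add, Nat.cast_mul, Int.cast_add, Int.cast_mul,
      Int.cast_natCast, pow_succ] at ih₀ ih₁ ⊢
    linear_combination (pq α (k + 2) : ℝ) * ih₁ + ih₀

lemma qd_mul_cfDist_add : ∀ k,
    (qd α (k + 1) : ℝ) * cfDist α (k + 1) + qd α k * cfDist α (k + 2) = 1
  | 0 => by simp only [qd, cfDist]; ring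
  | k + 1 => by
    have ih := qd_mul_cfDist_add k
    simp only [qd, cfDist, Nat.cast_add, Nat.cast_mul] at ih ⊢
    linear_combination ih

lemma cfDist_succ_mul_cq (hirr : Irrational α) (h0 : 0 < α) (h1 : α < 1) :
    ∀ k, cfDist α (k + 1) * cq α (k + 1) = cfDist α k
  | 0 => by rw [cq_one h0 h1]; exact mul_inv_cancel₀ h0.ne'
  | k + 1 => by
    have ih := cfDist_succ_mul_cq hirr h0 h1 k
    have hfract := fract_cq_succ hirr k
    rw [cq_succ, mul_inv_eq_iff_eq_mul₀ (fract_cq_pos hirr _).ne', hfract, cfDist]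
    linear_combination -ih

lemma cfDist_pos (hirr : Irrational α) (h0 : 0 < α) (h1 : α < 1) : ∀ k, 0 < cfDist α k
  | 0 => one_pos
  | k + 1 => by
    have h := cfDist_succ_mul_cq hirr h0 h1 k
    exact pos_of_mul_pos_left (h ▸ cfDist_pos hirr h0 h1 k)
      (one_pos.trans (one_lt_cq_succ hirr k)).le

lemma cfDist_succ_lt (hirr : Irrational α) (h0 : 0 < α) (h1 : α < 1) (k : ℕ) :
    cfDist α (k + 1) < cfDist α k := by
  rw [← cfDist_succ_mul_cq hirr h0 h1 k]
  exact lt_mul_of_one_lt_right (cfDist_pos hirr h0 h1 _) (one_lt_cq_succ hirr k)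

lemma cfDist_succ_le (hirr : Irrational α) (h0 : 0 < α) (h1 : α < 1) (k : ℕ) :
    cfDist α (k + 1) ≤ α :=
  (strictAnti_nat_of_succ_lt (cfDist_succ_lt hirr h0 h1)).antitone (Nat.le_add_left 1 k)

lemma qd_succ_mul_cfDist_lt_one (hirr : Irrational α) (h0 : 0 < α) (h1 : α < 1) (k : ℕ) :
    (qd α (k + 1) : ℝ) * cfDist α (k + 1) < 1 := by
  have hq : (1 : ℝ) ≤ qd α k := by exact_mod_cast one_le_qd hirr k
  nlinarith [qd_mul_cfDist_add (α := α) k, cfDist_pos hirr h0 h1 (k + 2)]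

lemma one_lt_qd_add_mul_cfDist (hirr : Irrational α) (h0 : 0 < α) (h1 : α < 1) (k : ℕ) :
    1 < ((qd α (k + 1) : ℝ) + qd α k) * cfDist α (k + 1) := by
  have hq : (1 : ℝ) ≤ qd α k := by exact_mod_cast one_le_qd hirr k
  nlinarith [qd_mul_cfDist_add (α := α) k, cfDist_succ_lt hirr h0 h1 (k + 1)]

lemma nint_eq_abs_sub_round (x : ℝ) : nint x = |x - round x| := (abs_sub_round_eq_min x).symm

lemma nint_le_abs_sub (x : ℝ) (z : ℤ) : nint x ≤ |x - z| := by
  rw [nint_eq_abs_sub_round]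
  exact round_le x z

lemma nint_intCast_add {d : ℝ} (z : ℤ) (hd : |d| < 1 / 2) : nint (z + d) = |d| := by
  have hround : round ((z : ℝ) + d) = z := by
    rw [round_eq_iff, Set.mem_Ico]
    constructor <;> linarith [abs_lt.mp hd]
  rw [nint_eq_abs_sub_round, hround, add_sub_cancel_left]

lemma nint_qd_mul (hirr : Irrational α) (h0 : 0 < α) (h2 : α < 1 / 2) (k : ℕ) :
    nint ((qd α k : ℝ) * α) = cfDist α (k + 1) := by
  have h1 : α < 1 := by linarith
  have hpos := cfDist_pos hirr h0 h1 (k + 1)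
  have habs : |(-1) ^ k * cfDist α (k + 1)| = cfDist α (k + 1) := by
    rw [abs_mul, abs_pow, abs_neg, abs_one, one_pow, one_mul, abs_of_pos hpos]
  rw [← sub_add_cancel ((qd α k : ℝ) * α) (convNum α k), qd_mul_sub_convNum, add_comm,
    nint_intCast_add _ (by rw [habs]; linarith [cfDist_succ_le hirr h0 h1 k]), habs]

lemma floor_add_sub_floor (h0 : 0 < α) (h1 : α < 1) (z : ℝ) :
    ⌊z + α⌋ - ⌊z⌋ = if 1 - α ≤ Int.fract z then 1 else 0 := by
  have hfract : Int.fract z = z - ⌊z⌋ := rfl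
  have := Int.floor_le z
  have := Int.lt_floor_add_one z
  rw [sub_eq_iff_eq_add']
  split_ifs with h
  · rw [Int.floor_eq_iff]; push_cast; constructor <;> linarith
  · rw [Int.floor_eq_iff]; push_cast; constructor <;> linarith

lemma ceil_add_sub_ceil (h0 : 0 < α) (h1 : α < 1) (z : ℝ) :
    ⌈z + α⌉ - ⌈z⌉ = if 1 - α < fract' z then 1 else 0 := by
  have hfract : fract' z = 1 + z - ⌈z⌉ := by
    rw [fract', Int.fract, Int.floor_neg]; push_cast; ring
  have := Int.le_ceil z
  have := Int.ceil_lt_add_one z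
  rw [sub_eq_iff_eq_add']
  split_ifs with h
  · rw [Int.ceil_eq_iff]; push_cast; constructor <;> linarith
  · rw [Int.ceil_eq_iff]; push_cast; constructor <;> linarith

lemma lowerWord_toNat (h0 : 0 < α) (h1 : α < 1) (ρ : ℝ) (n : ℕ) :
    ((lowerWord α ρ n).toNat : ℤ) = ⌊ρ + ((n + 1 : ℕ) : ℝ) * α⌋ - ⌊ρ + (n : ℝ) * α⌋ := by
  rw [Nat.cast_succ, add_one_mul, ← add_assoc, floor_add_sub_floor h0 h1, lowerWord]
  split_ifs <;> rfl

lemma upperWord_toNat (h0 : 0 < α) (h1 : α < 1) (ρ : ℝ) (n : ℕ) :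
    ((upperWord α ρ n).toNat : ℤ) = ⌈ρ + ((n + 1 : ℕ) : ℝ) * α⌉ - ⌈ρ + (n : ℝ) * α⌉ := by
  rw [Nat.cast_succ, add_one_mul, ← add_assoc, ceil_add_sub_ceil h0 h1, upperWord]
  split_ifs <;> rfl

/-- `N n` is `⌊ρ + n α⌋` or `⌈ρ + n α⌉`: the deviations `N n - (ρ + n α)` all lie on the same side
of `0`, within distance `1`. -/
lemma IsSturmian.exists_height (h0 : 0 < α) (h1 : α < 1) {s : ℕ → Bool}
    (hs : IsSturmian α s) :
    ∃ N : ℕ → ℤ, (∀ n, ((s n).toNat : ℤ) = N (n + 1) - N n) ∧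
      ∀ a b : ℕ, |((N a : ℝ) - N b) - ((a : ℝ) - b) * α| < 1 := by
  obtain ⟨ρ, -, -, rfl | rfl⟩ := hs
  · refine ⟨fun n => ⌊ρ + (n : ℝ) * α⌋, lowerWord_toNat h0 h1 ρ, fun a b => abs_lt.mpr ?_⟩
    have := Int.floor_le (ρ + (a : ℝ) * α)
    have := Int.lt_floor_add_one (ρ + (a : ℝ) * α)
    have := Int.floor_le (ρ + (b : ℝ) * α)
    have := Int.lt_floor_add_one (ρ + (b : ℝ) * α)
    constructor <;> linarith
  · refine ⟨fun n => ⌈ρ + (n : ℝ) * α⌉, upperWord_toNat h0 h1 ρ, fun a b => abs_lt.mpr ?_⟩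
    have := Int.le_ceil (ρ + (a : ℝ) * α)
    have := Int.ceil_lt_add_one (ρ + (a : ℝ) * α)
    have := Int.le_ceil (ρ + (b : ℝ) * α)
    have := Int.ceil_lt_add_one (ρ + (b : ℝ) * α)
    constructor <;> linarith

lemma take_drop_map_range {X : Type*} (f : ℕ → X) {L a b : ℕ} (h : a + b ≤ L) :
    (((List.range L).map f).drop a).take b = (List.range b).map fun l => f (a + l) := by
  apply List.ext_getElem
  · simp only [List.length_take, List.length_drop, List.length_map, List.length_range]
    omega
  · intro n _ _
    simp

section Height

variable {s : ℕ → Bool} {N : ℕ → ℤ}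

lemma count_true_map_range (hN : ∀ n, ((s n).toNat : ℤ) = N (n + 1) - N n) (i n : ℕ) :
    ((((List.range n).map fun j => s (i + j)).count true : ℕ) : ℤ) = N (i + n) - N i := by
  induction n with
  | zero => simp
  | succ n ih =>
    have hsingle : ∀ b : Bool, [b].count true = b.toNat := by decide
    rw [List.range_succ, List.map_append, List.count_append, Nat.cast_add, ih, List.map_singleton,
      hsingle, hN, ← add_assoc]
    ring

lemma isAbelianPower_map_range_iff (hN : ∀ n, ((s n).toNat : ℤ) = N (n + 1) - N n)
    {m e : ℕ} (hm : 1 ≤ m) (he : 2 ≤ e) (i : ℕ) :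
    IsAbelianPower m e ((List.range (e * m)).map fun j => s (i + j)) ↔
      ∀ j < e, N (i + (j + 1) * m) - N (i + j * m) = N (i + m) - N i := by
  have hblock : ∀ j < e, ((((List.range (e * m)).map fun j => s (i + j)).drop (j * m)).take m)
      = (List.range m).map fun l => s (i + j * m + l) := by
    intro j hj
    rw [take_drop_map_range _ (by nlinarith)]
    simp only [add_assoc]
  have hcount : ∀ j < e, ((((List.range m).map fun l => s (i + j * m + l)).count true : ℕ) : ℤ)
      = N (i + (j + 1) * m) - N (i + j * m) := by
    intro j _
    rw [count_true_map_range hN, add_one_mul, add_assoc]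
  constructor
  · rintro ⟨-, -, -, hab⟩ j hj
    have := congrArg (Nat.cast : ℕ → ℤ) (hab j hj 0 (by omega)).2
    rw [hblock j hj, hblock 0 (by omega), hcount j hj, hcount 0 (by omega)] at this
    simpa using this
  · intro hinc
    refine ⟨hm, he, by simp, fun j hj j' hj' => ?_⟩
    rw [hblock j hj, hblock j' hj']
    refine ⟨by simp, ?_⟩
    have := (hcount j hj).trans ((hinc j hj).trans ((hinc j' hj').symm.trans (hcount j' hj').symm))
    exact_mod_cast this

end Height

lemma mul_nint_lt_one_of_isAbelianPower (h0 : 0 < α) (h1 : α < 1) {m e : ℕ} {u : List Bool}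
    (hu : IsFactor α u) (hp : IsAbelianPower m e u) : (e : ℝ) * nint (m * α) < 1 := by
  obtain ⟨s, hs, i, hu⟩ := hu
  rw [hp.2.2.1] at hu
  subst hu
  obtain ⟨N, hN, hbound⟩ := hs.exists_height h0 h1
  have hinc := (isAbelianPower_map_range_iff hN hp.1 hp.2.1 i).mp hp
  set c := N (i + m) - N i
  have htelescope : N (i + e * m) - N i = e * c := by
    have := Finset.sum_range_sub (fun j => N (i + j * m)) e
    simp only [zero_mul, add_zero] at this
    rw [← this, Finset.sum_congr rfl fun j hj => hinc j (Finset.mem_range.mp hj)]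
    simp
  have htelescope' : ((N (i + e * m) : ℝ) - N i) = e * c := by exact_mod_cast htelescope
  calc (e : ℝ) * nint (m * α) ≤ e * |m * α - c| := by gcongr; exact nint_le_abs_sub _ c
    _ = |(e : ℝ) * (m * α - c)| := by rw [abs_mul, Nat.abs_cast]
    _ = |((N (i + e * m) : ℝ) - N i) - (((i + e * m : ℕ) : ℝ) - i) * α| := by
      rw [htelescope', ← abs_neg]
      congr 1
      push_cast
      ring
    _ < 1 := hbound _ _

lemma exists_floor_add_mul_eq_zero {γ : ℝ} {e : ℕ} (h : e * |γ| < 1) :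
    ∃ ρ : ℝ, 0 ≤ ρ ∧ ρ < 1 ∧ ∀ j ≤ e, ⌊ρ + j * γ⌋ = 0 := by
  rcases le_or_gt 0 γ with hγ | hγ
  · rw [abs_of_nonneg hγ] at h
    refine ⟨0, le_rfl, one_pos, fun j hj => Int.floor_eq_zero_iff.mpr ⟨?_, ?_⟩⟩
    · rw [zero_add]
      exact mul_nonneg j.cast_nonneg hγ
    · have : (j : ℝ) * γ ≤ e * γ := by gcongr
      linarith
  · rw [abs_of_neg hγ] at h
    refine ⟨-(e * γ), by nlinarith [e.cast_nonneg (α := ℝ)], by linarith,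
      fun j hj => Int.floor_eq_zero_iff.mpr ⟨?_, ?_⟩⟩
    · have : (j : ℝ) ≤ e := by exact_mod_cast hj
      nlinarith
    · have : 0 ≤ (j : ℝ) * -γ := mul_nonneg j.cast_nonneg (by linarith)
      linarith

lemma exists_isAbelianPower_of_mul_nint_lt_one (h0 : 0 < α) (h1 : α < 1) {m e : ℕ} (hm : 1 ≤ m)
    (he : 2 ≤ e) (h : (e : ℝ) * nint (m * α) < 1) :
    ∃ u : List Bool, IsFactor α u ∧ IsAbelianPower m e u := by
  set c := round ((m : ℝ) * α)
  rw [nint_eq_abs_sub_round] at h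
  obtain ⟨ρ, hρ0, hρ1, hρ⟩ := exists_floor_add_mul_eq_zero h
  have hfloor : ∀ j ≤ e, ⌊ρ + ((j * m : ℕ) : ℝ) * α⌋ = j * c := by
    intro j hj
    have hsplit : ρ + ((j * m : ℕ) : ℝ) * α = (ρ + j * (m * α - c)) + ((j * c : ℤ) : ℝ) := by
      push_cast; ring
    rw [hsplit, Int.floor_add_intCast, hρ j hj, zero_add]
  refine ⟨(List.range (e * m)).map fun j => lowerWord α ρ (0 + j),
    ⟨lowerWord α ρ, ⟨ρ, hρ0, hρ1, .inl rfl⟩, 0, by simp⟩, ?_⟩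
  rw [isAbelianPower_map_range_iff (N := fun n => ⌊ρ + (n : ℝ) * α⌋) (lowerWord_toNat h0 h1 ρ)
    hm he]
  intro j hj
  have hfloor₀ : ⌊ρ + ((0 : ℕ) : ℝ) * α⌋ = 0 := by simpa using hfloor 0 (by omega)
  have hfloor₁ : ⌊ρ + (m : ℝ) * α⌋ = c := by simpa using hfloor 1 (by omega)
  simp only [zero_add]
  rw [hfloor (j + 1) hj, hfloor j hj.le, hfloor₀, hfloor₁]
  push_cast
  ring

theorem exponent_lower_and_upper_bound
    (α : ℝ) (hirr : Irrational α) (h0 : 0 < α) (h2 : α < 1 / 2)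
    (k : ℕ) (m : ℕ) (hm : 0 < m) :
    (nint ((m : ℝ) * α) ≤ nint ((qd α k : ℝ) * α) →
      ∃ u : List Bool, IsFactor α u ∧ IsAbelianPower m (qd α (k + 1)) u) ∧
    (nint ((qd α k : ℝ) * α) ≤ nint ((m : ℝ) * α) →
      ∀ e : ℕ, ∀ u : List Bool, IsFactor α u → IsAbelianPower m e u →
        e < qd α (k + 1) + qd α k) := by
  have h1 : α < 1 := by linarith
  rw [nint_qd_mul hirr h0 h2 k]
  refine ⟨fun hle => exists_isAbelianPower_of_mul_nint_lt_one h0 h1 hm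
    (two_le_qd_succ hirr h0 h2 k) ?_, fun hge e u hu hp => ?_⟩
  · calc (qd α (k + 1) : ℝ) * nint (m * α) ≤ qd α (k + 1) * cfDist α (k + 1) := by gcongr
      _ < 1 := qd_succ_mul_cfDist_lt_one hirr h0 h1 k
  · have hpower := mul_nint_lt_one_of_isAbelianPower h0 h1 hu hp
    have hconv := one_lt_qd_add_mul_cfDist hirr h0 h1 k
    by_contra! hle
    have hle' : ((qd α (k + 1) : ℝ) + qd α k) ≤ e := by exact_mod_cast hle
    nlinarith [cfDist_pos hirr h0 h1 (k + 1)]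

end SturmianAbelian
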